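/- arXiv:1312.1579 — 3 statements merged into one kernel-verified Lean document; each statement's English description precedes it below -/
import Mathlib

section
/- The modulational instability index satisfies lim_{z→∞} Γ(z) = −1. -/
/-- The Whitham dispersion symbol `α(ξ) = √(tanh ξ / ξ)` for `ξ ≠ 0`, with `α(0) = 1`. -/
noncomputable def whithamSymbol (ξ : ℝ) : ℝ :=
  if ξ = 0 then 1 else Real.sqrt (Real.tanh ξ / ξ)

/-- The modulational instability index `Γ(z) = 3α(z) − 2α(2z) − 1 + z·α'(z)`. -/
noncomputable def modulationalIndex (z : ℝ) : ℝ :=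
  3 * whithamSymbol z - 2 * whithamSymbol (2 * z) - 1 + z * deriv whithamSymbol z

open Filter Real

lemma my_tanh_pos {x : ℝ} (hx : 0 < x) : 0 < Real.tanh x := by
  rw [Real.tanh_eq_sinh_div_cosh]
  exact div_pos (Real.sinh_pos_iff.2 hx) (Real.cosh_pos x)

lemma my_tanh_lt_one (x : ℝ) : Real.tanh x < 1 := by
  rw [Real.tanh_eq_sinh_div_cosh]
  exact (div_lt_one (Real.cosh_pos x)).2 (Real.sinh_lt_cosh x)

lemma my_tanh_mono {a b : ℝ} (h : a ≤ b) : Real.tanh a ≤ Real.tanh b := by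
  rw [Real.tanh_eq_sinh_div_cosh, Real.tanh_eq_sinh_div_cosh,
    div_le_div_iff₀ (Real.cosh_pos a) (Real.cosh_pos b)]
  have h1 : 0 ≤ Real.sinh (b - a) := Real.sinh_nonneg_iff.2 (sub_nonneg.2 h)
  rw [Real.sinh_sub] at h1
  linarith

lemma my_hasDerivAt_tanh (x : ℝ) : HasDerivAt Real.tanh (1 - Real.tanh x ^ 2) x := by
  have h : HasDerivAt (fun y => Real.sinh y / Real.cosh y)
      ((Real.cosh x * Real.cosh x - Real.sinh x * Real.sinh x) / Real.cosh x ^ 2) x :=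
    (Real.hasDerivAt_sinh x).div (Real.hasDerivAt_cosh x) (Real.cosh_pos x).ne'
  have heq : Real.tanh = fun y => Real.sinh y / Real.cosh y :=
    funext fun y => Real.tanh_eq_sinh_div_cosh y
  rw [heq]
  convert h using 1
  have hc := (Real.cosh_pos x).ne'
  have h2 := Real.cosh_sq_sub_sinh_sq x
  show 1 - (Real.sinh x / Real.cosh x) ^ 2 = _
  field_simp

lemma whitham_hasDerivAt {x : ℝ} (hx : 0 < x) :
    HasDerivAt whithamSymbol
      (((1 - Real.tanh x ^ 2) * x - Real.tanh x) / x ^ 2 / (2 * Real.sqrt (Real.tanh x / x))) x := by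
  have hdiv : HasDerivAt (fun y => Real.tanh y / y)
      (((1 - Real.tanh x ^ 2) * x - Real.tanh x * 1) / x ^ 2) x :=
    (my_hasDerivAt_tanh x).div (hasDerivAt_id x) hx.ne'
  have hs := hdiv.sqrt (ne_of_gt (div_pos (my_tanh_pos hx) hx))
  have hev : whithamSymbol =ᶠ[nhds x] fun y => Real.sqrt (Real.tanh y / y) := by
    filter_upwards [eventually_ne_nhds hx.ne'] with y hy
    simp [whithamSymbol, hy]
  have := hs.congr_of_eventuallyEq hev
  simpa using this

lemma sqrt_inv_tendsto : Filter.Tendsto (fun z : ℝ => Real.sqrt z⁻¹) Filter.atTop (nhds 0) := by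
  have := (Real.continuous_sqrt.tendsto 0).comp tendsto_inv_atTop_zero
  simpa [Function.comp_def] using this

lemma whitham_tendsto_zero : Filter.Tendsto whithamSymbol Filter.atTop (nhds 0) := by
  refine tendsto_of_tendsto_of_tendsto_of_le_of_le' tendsto_const_nhds sqrt_inv_tendsto ?_ ?_
  · filter_upwards [eventually_ge_atTop (1 : ℝ)] with z hz
    have hz0 : (0 : ℝ) < z := lt_of_lt_of_le one_pos hz
    simp [whithamSymbol, hz0.ne', Real.sqrt_nonneg]
  · filter_upwards [eventually_ge_atTop (1 : ℝ)] with z hz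
    have hz0 : (0 : ℝ) < z := lt_of_lt_of_le one_pos hz
    rw [whithamSymbol, if_neg hz0.ne']
    refine Real.sqrt_le_sqrt ?_
    rw [← one_div]
    exact div_le_div₀ zero_le_one (my_tanh_lt_one z).le hz0 le_rfl

lemma zderiv_tendsto :
    Filter.Tendsto (fun z => z * deriv whithamSymbol z) Filter.atTop (nhds 0) := by
  have hg : Filter.Tendsto (fun z : ℝ => (Real.sqrt (Real.tanh 1))⁻¹ * Real.sqrt z⁻¹)
      Filter.atTop (nhds 0) := by
    simpa using sqrt_inv_tendsto.const_mul (Real.sqrt (Real.tanh 1))⁻¹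
  apply squeeze_zero_norm' ?_ hg
  filter_upwards [eventually_ge_atTop (1 : ℝ)] with z hz
  have hz0 : (0 : ℝ) < z := lt_of_lt_of_le one_pos hz
  set t := Real.tanh z with ht
  have ht0 : 0 < t := my_tanh_pos hz0
  have ht1 : t < 1 := my_tanh_lt_one z
  have hd : deriv whithamSymbol z =
      ((1 - t ^ 2) * z - t) / z ^ 2 / (2 * Real.sqrt (t / z)) :=
    (whitham_hasDerivAt hz0).deriv
  -- key facts
  have hcosh : z < Real.cosh z := lt_trans (Real.self_lt_sinh_iff.2 hz0) (Real.sinh_lt_cosh z)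
  have hone_sub : 1 - t ^ 2 = (Real.cosh z ^ 2)⁻¹ := by
    rw [ht, Real.tanh_eq_sinh_div_cosh]
    have hc := (Real.cosh_pos z).ne'
    field_simp
    linarith [Real.cosh_sq_sub_sinh_sq z]
  have hnum : |(1 - t ^ 2) * z - t| ≤ 1 := by
    rw [abs_le]
    have hpos : (0:ℝ) ≤ 1 - t ^ 2 := by nlinarith
    constructor
    · nlinarith [mul_nonneg hpos hz0.le]
    · have h1 : (1 - t ^ 2) * z ≤ 1 := by
        rw [hone_sub]
        rw [inv_mul_le_iff₀ (by positivity)]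
        nlinarith
      nlinarith
  have hsq : Real.sqrt (t / z) * z = Real.sqrt (t * z) := by
    rw [← Real.sqrt_sq hz0.le, ← Real.sqrt_mul (by positivity)]
    congr 1
    field_simp
    rw [Real.sq_sqrt (by positivity)]
  have hden_ge : Real.sqrt (Real.tanh 1) * Real.sqrt z ≤ Real.sqrt (t * z) := by
    rw [← Real.sqrt_mul (my_tanh_pos one_pos).le]
    exact Real.sqrt_le_sqrt (by nlinarith [my_tanh_mono hz])
  have hA : 0 < Real.sqrt (Real.tanh 1) := Real.sqrt_pos.2 (my_tanh_pos one_pos)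
  have hB : 0 < Real.sqrt z := Real.sqrt_pos.2 hz0
  have hs0 : 0 < Real.sqrt (t / z) := Real.sqrt_pos.2 (by positivity)
  rw [hd]
  have hre : z * (((1 - t ^ 2) * z - t) / z ^ 2 / (2 * Real.sqrt (t / z))) =
      ((1 - t ^ 2) * z - t) / (2 * (Real.sqrt (t / z) * z)) := by
    field_simp
  rw [hre, hsq, Real.norm_eq_abs, abs_div]
  have habs : |(2 : ℝ) * Real.sqrt (t * z)| = 2 * Real.sqrt (t * z) := by
    refine abs_of_pos ?_
    have : 0 < Real.sqrt (t * z) := lt_of_lt_of_le (by positivity) hden_ge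
    linarith
  rw [habs, Real.sqrt_inv]
  calc |(1 - t ^ 2) * z - t| / (2 * Real.sqrt (t * z))
      ≤ 1 / (Real.sqrt (Real.tanh 1) * Real.sqrt z) := by
        apply div_le_div₀ zero_le_one hnum (by positivity)
        nlinarith [hden_ge, Real.sqrt_nonneg (t * z)]
    _ = (Real.sqrt (Real.tanh 1))⁻¹ * (Real.sqrt z)⁻¹ := by
        rw [one_div, mul_inv]

theorem modulationalIndex_limit_atTop :
    Filter.Tendsto modulationalIndex Filter.atTop (nhds (-1)) := by
  have h1 : Filter.Tendsto (fun z => 3 * whithamSymbol z) Filter.atTop (nhds (3 * 0)) :=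
    whitham_tendsto_zero.const_mul 3
  have h2t : Filter.Tendsto (fun z : ℝ => 2 * z) Filter.atTop Filter.atTop :=
    Filter.tendsto_id.const_mul_atTop two_pos
  have h2 : Filter.Tendsto (fun z => 2 * whithamSymbol (2 * z)) Filter.atTop (nhds (2 * 0)) :=
    (whitham_tendsto_zero.comp h2t).const_mul 2
  have h := ((h1.sub h2).sub (tendsto_const_nhds (x := (1:ℝ)))).add zderiv_tendsto
  have : (3 * 0 - 2 * 0 - 1 + 0 : ℝ) = -1 := by norm_num
  rw [this] at h
  exact h
end

section
/- There exist 0 < z₀ < z₁ such that Γ(z) > 0 for all z ∈ (0, z₀) and Γ(z) < 0 for all z ∈ (z₁, ∞); consequently Γ has at least one zero in (0,∞). -/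
open Real Set

lemma mono_aux {b : ℝ} {f f' : ℝ → ℝ} (hf : ∀ x, HasDerivAt f (f' x) x)
    (h0 : ∀ x, 0 ≤ x → x ≤ b → 0 ≤ f' x) {z : ℝ} (hz : 0 ≤ z) (hzb : z ≤ b) :
    f 0 ≤ f z := by
  have hb : (0:ℝ) ≤ b := le_trans hz hzb
  have hdiff : Differentiable ℝ f := fun x => (hf x).differentiableAt
  have hmono : MonotoneOn f (Icc 0 b) := by
    apply monotoneOn_of_deriv_nonneg (convex_Icc 0 b) hdiff.continuous.continuousOn
      (fun x _ => (hdiff x).differentiableWithinAt)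
    intro x hx
    rw [interior_Icc] at hx
    rw [(hf x).deriv]
    exact h0 x hx.1.le hx.2.le
  exact hmono ⟨le_refl 0, hb⟩ ⟨hz, hzb⟩ hz

lemma sinh_nn {z : ℝ} (hz : 0 ≤ z) : 0 ≤ Real.sinh z := by
  rw [← Real.sinh_zero]
  exact Real.sinh_le_sinh.mpr hz

lemma sinh_le_mul_cosh {z : ℝ} (hz : 0 ≤ z) : Real.sinh z ≤ z * Real.cosh z := by
  have := mono_aux (f := fun x => x * Real.cosh x - Real.sinh x)
    (f' := fun x => x * Real.sinh x)
    (fun x => by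
      have h1 := (hasDerivAt_id x).mul (Real.hasDerivAt_cosh x)
      have h2 := Real.hasDerivAt_sinh x
      refine (h1.sub h2).congr_deriv ?_
      simp only [id_eq]; ring)
    (fun x hx _ => mul_nonneg hx (sinh_nn hx)) hz (le_refl z)
  simp at this
  linarith

lemma mul_cosh_le_sinh {z : ℝ} (hz : 0 ≤ z) : (z - z^3/3) * Real.cosh z ≤ Real.sinh z := by
  have := mono_aux (f := fun x => Real.sinh x - (x - x^3/3) * Real.cosh x)
    (f' := fun x => x^2 * Real.cosh x - (x - x^3/3) * Real.sinh x)
    (fun x => by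
      have h1 := Real.hasDerivAt_sinh x
      have h2 := (((hasDerivAt_id x).sub ((hasDerivAt_pow 3 x).div_const 3)).mul (Real.hasDerivAt_cosh x))
      refine (h1.sub h2).congr_deriv ?_
      simp only [Pi.sub_apply, Pi.add_apply, id_eq]; push_cast; ring)
    (fun x hx _ => by
      have hc := Real.cosh_pos x
      have hsn := sinh_nn hx
      rcases le_or_gt (x - x^3/3) 0 with h | h
      · nlinarith
      · have hs := sinh_le_mul_cosh hx
        have h1 : (x - x^3/3) * Real.sinh x ≤ (x - x^3/3) * (x * Real.cosh x) :=
          mul_le_mul_of_nonneg_left hs h.le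
        nlinarith [mul_nonneg (mul_nonneg (mul_nonneg hx hx) (mul_nonneg hx hx)) hc.le])
    hz (le_refl z)
  simp at this
  linarith

lemma tanh_le_self {z : ℝ} (hz : 0 ≤ z) : Real.tanh z ≤ z := by
  rw [Real.tanh_eq_sinh_div_cosh, div_le_iff₀ (Real.cosh_pos z)]
  exact sinh_le_mul_cosh hz

lemma tanh_lb {z : ℝ} (hz : 0 ≤ z) : z - z^3/3 ≤ Real.tanh z := by
  rw [Real.tanh_eq_sinh_div_cosh, le_div_iff₀ (Real.cosh_pos z)]
  exact mul_cosh_le_sinh hz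

lemma tanh_ub {z : ℝ} (hz : 0 ≤ z) (hz1 : z ≤ 1) :
    Real.tanh z ≤ z - z^3/3 + 2*z^5/15 := by
  have := mono_aux (b := 1) (f := fun x => (x - x^3/3 + 2*x^5/15) * Real.cosh x - Real.sinh x)
    (f' := fun x => (-x^2 + 2/3*x^4) * Real.cosh x + (x - x^3/3 + 2*x^5/15) * Real.sinh x)
    (fun x => by
      have h2 := ((((hasDerivAt_id x).sub ((hasDerivAt_pow 3 x).div_const 3)).add
        (((hasDerivAt_pow 5 x).const_mul 2).div_const 15)).mul (Real.hasDerivAt_cosh x))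
      refine (h2.sub (Real.hasDerivAt_sinh x)).congr_deriv ?_
      simp only [Pi.sub_apply, Pi.add_apply, id_eq]; push_cast; ring)
    (fun x hx hx1 => by
      have hc := Real.cosh_pos x
      have hs := mul_cosh_le_sinh hx
      have hx2 : x^2 ≤ 1 := by nlinarith
      have hx3 : x^3 ≤ x := by nlinarith
      have hcoef : (0:ℝ) ≤ x - x^3/3 + 2*x^5/15 := by nlinarith [pow_nonneg hx 5]
      have h1 : (x - x^3/3 + 2*x^5/15) * ((x - x^3/3) * Real.cosh x)
          ≤ (x - x^3/3 + 2*x^5/15) * Real.sinh x :=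
        mul_le_mul_of_nonneg_left hs hcoef
      have key : 0 ≤ (x^6/9 + 2*x^6/15 - 2*x^8/45) * Real.cosh x := by
        apply mul_nonneg _ hc.le
        nlinarith [mul_nonneg (pow_nonneg hx 6) (by linarith : (0:ℝ) ≤ 11 - 2*x^2)]
      nlinarith [key, h1])
    hz hz1
  simp at this
  rw [Real.tanh_eq_sinh_div_cosh, div_le_iff₀ (Real.cosh_pos z)]
  linarith

lemma sech_sq_mul_le {z : ℝ} (hz : 0 ≤ z) : 1 / Real.cosh z ^ 2 * z ≤ Real.tanh z := by
  have hc := Real.cosh_pos z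
  have h2 : 2 * z ≤ Real.sinh (2 * z) := by
    rcases eq_or_lt_of_le hz with rfl | hz'
    · simp
    · exact (Real.self_lt_sinh_iff.mpr (by linarith)).le
  rw [Real.sinh_two_mul] at h2
  rw [Real.tanh_eq_sinh_div_cosh, div_mul_eq_mul_div, div_le_div_iff₀ (by positivity) hc]
  nlinarith


noncomputable def wD (z : ℝ) : ℝ :=
  ((1 / Real.cosh z ^ 2 * z - Real.tanh z * 1) / z ^ 2) / (2 * Real.sqrt (Real.tanh z / z))

lemma tanh_pos' {z : ℝ} (hz : 0 < z) : 0 < Real.tanh z := by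
  rw [Real.tanh_eq_sinh_div_cosh]
  exact div_pos (Real.sinh_pos_iff.mpr hz) (Real.cosh_pos z)

lemma hasDerivAt_tanh' (z : ℝ) : HasDerivAt Real.tanh (1 / Real.cosh z ^ 2) z := by
  have h := (Real.hasDerivAt_sinh z).div (Real.hasDerivAt_cosh z) (Real.cosh_pos z).ne'
  have hfun : Real.tanh = fun x => Real.sinh x / Real.cosh x :=
    funext fun x => Real.tanh_eq_sinh_div_cosh x
  rw [hfun]
  refine h.congr_deriv ?_
  have := Real.cosh_sq z
  field_simp
  nlinarith [Real.cosh_pos z]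

lemma hasDerivAt_whitham {z : ℝ} (hz : 0 < z) : HasDerivAt whithamSymbol (wD z) z := by
  have hfz : Real.tanh z / z ≠ 0 := (div_pos (tanh_pos' hz) hz).ne'
  have hdiv : HasDerivAt (fun w => Real.tanh w / w)
      ((1 / Real.cosh z ^ 2 * z - Real.tanh z * 1) / z ^ 2) z :=
    (hasDerivAt_tanh' z).div (hasDerivAt_id z) hz.ne'
  have hsq := hdiv.sqrt hfz
  apply hsq.congr_of_eventuallyEq
  filter_upwards [eventually_ne_nhds hz.ne'] with w hw
  simp [whithamSymbol, hw]

lemma gamma_eq {z : ℝ} (hz : 0 < z) :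
    modulationalIndex z = 3 * Real.sqrt (Real.tanh z / z)
      - 2 * Real.sqrt (Real.tanh (2*z) / (2*z)) - 1 + z * wD z := by
  have h2z : (2:ℝ) * z ≠ 0 := by positivity
  rw [modulationalIndex, (hasDerivAt_whitham hz).deriv, whithamSymbol, whithamSymbol,
    if_neg hz.ne', if_neg h2z]

lemma tanh_lt_one' (z : ℝ) : Real.tanh z < 1 := by
  rw [Real.tanh_eq_sinh_div_cosh, div_lt_one (Real.cosh_pos z)]
  nlinarith [Real.exp_pos (-z), Real.cosh_sub_sinh z]

lemma sech_sq_eq (z : ℝ) : 1 / Real.cosh z ^ 2 = 1 - Real.tanh z ^ 2 := by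
  have h := Real.cosh_sq z
  have hc := Real.cosh_pos z
  rw [Real.tanh_eq_sinh_div_cosh]
  field_simp
  linarith

set_option maxHeartbeats 1000000 in
lemma gamma_pos {z : ℝ} (h0 : 0 < z) (h1 : z < 3/10) : 0 < modulationalIndex z := by
  have hz2 : (0:ℝ) < 2*z := by linarith
  have hzz : z^2 ≤ 9/100 := by nlinarith
  have h4 : z^4 ≤ (9/100)*z^2 := by nlinarith [sq_nonneg z]
  set t := Real.tanh z with htdef
  set t2 := Real.tanh (2*z) with ht2def
  have ht_le : t ≤ z := tanh_le_self h0.le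
  have ht_lb : z - z^3/3 ≤ t := tanh_lb h0.le
  have ht_pos : 0 < t := tanh_pos' h0
  have ht2_ub : t2 ≤ 2*z - (2*z)^3/3 + 2*(2*z)^5/15 := tanh_ub hz2.le (by linarith)
  have ht2_pos : 0 < t2 := tanh_pos' hz2
  -- lower bound for A = sqrt (t/z)
  have hA_lb : 1 - z^2/6 - z^4/18 ≤ Real.sqrt (t/z) := by
    have h6 : z^6 ≤ (9/100)*z^4 := by nlinarith [pow_nonneg h0.le 4]
    have h8 : z^8 ≤ (81/10000)*z^4 := by nlinarith [pow_nonneg h0.le 4, sq_nonneg (z^2)]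
    have hsq : (1 - z^2/6 - z^4/18)^2 ≤ 1 - z^2/3 := by nlinarith [pow_nonneg h0.le 4]
    rw [Real.le_sqrt (by nlinarith) (by positivity)]
    rw [le_div_iff₀ h0]
    calc (1 - z^2/6 - z^4/18)^2 * z ≤ (1 - z^2/3) * z :=
          mul_le_mul_of_nonneg_right hsq h0.le
      _ ≤ t := by nlinarith
  have hA_pos : 0 < Real.sqrt (t/z) := Real.sqrt_pos.mpr (by positivity)
  -- upper bound for B = sqrt (t2/(2z))
  have hB_ub : Real.sqrt (t2/(2*z)) ≤ 1 - 2*z^2/3 + 16*z^4/15 := by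
    rw [Real.sqrt_le_iff]
    constructor
    · nlinarith
    · rw [div_le_iff₀ hz2]
      nlinarith [sq_nonneg (2*z^2/3 - 16*z^4/15)]
  -- lower bound for z * wD z
  have hnum_lb : -z^3 ≤ 1 / Real.cosh z ^ 2 * z - t * 1 := by
    rw [sech_sq_eq]
    have htt : t*t ≤ z*z := mul_le_mul ht_le ht_le ht_pos.le h0.le
    nlinarith [mul_le_mul_of_nonneg_left htt h0.le]
  have hwd : z * wD z = (1 / Real.cosh z ^ 2 * z - t * 1) / (2 * z * Real.sqrt (t/z)) := by
    rw [wD, ← htdef]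
    field_simp
  have hC_lb : -(13/25) * z^2 ≤ z * wD z := by
    rw [hwd, le_div_iff₀ (by positivity)]
    have hA1 : (25:ℝ)/26 ≤ Real.sqrt (t/z) := by nlinarith
    have hz3 : (0:ℝ) ≤ z^3 := by positivity
    have key : -(26/25)*z^3 * Real.sqrt (t/z) ≤ -z^3 := by
      nlinarith [mul_le_mul_of_nonneg_left hA1 (by positivity : (0:ℝ) ≤ (26/25) * z^3)]
    calc -(13/25) * z^2 * (2 * z * Real.sqrt (t/z)) = -(26/25)*z^3 * Real.sqrt (t/z) := by ring
      _ ≤ -z^3 := key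
      _ ≤ _ := hnum_lb
  rw [gamma_eq h0, ← htdef, ← ht2def]
  nlinarith [hA_lb, hB_ub, hC_lb, h4, sq_nonneg z]

lemma gamma_neg {z : ℝ} (h9 : 9 < z) : modulationalIndex z < 0 := by
  have h0 : (0:ℝ) < z := by linarith
  have hz2 : (0:ℝ) < 2*z := by linarith
  have ht_pos : 0 < Real.tanh z := tanh_pos' h0
  have hA_lt : Real.sqrt (Real.tanh z / z) < 1/3 := by
    rw [Real.sqrt_lt' (by norm_num)]
    rw [div_lt_iff₀ h0]
    nlinarith [tanh_lt_one' z]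
  have hB_nn : 0 ≤ Real.sqrt (Real.tanh (2*z) / (2*z)) := Real.sqrt_nonneg _
  have hA_pos : 0 < Real.sqrt (Real.tanh z / z) := Real.sqrt_pos.mpr (by positivity)
  have hnum : 1 / Real.cosh z ^ 2 * z - Real.tanh z * 1 ≤ 0 := by
    have := sech_sq_mul_le h0.le
    linarith
  have hC : z * wD z ≤ 0 := by
    apply mul_nonpos_of_nonneg_of_nonpos h0.le
    rw [wD]
    apply div_nonpos_of_nonpos_of_nonneg
    · apply div_nonpos_of_nonpos_of_nonneg hnum (by positivity)
    · positivity
  rw [gamma_eq h0]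
  nlinarith

lemma continuous_tanh' : Continuous Real.tanh := by
  have : Real.tanh = fun x => Real.sinh x / Real.cosh x :=
    funext fun x => Real.tanh_eq_sinh_div_cosh x
  rw [this]
  exact Real.continuous_sinh.div Real.continuous_cosh fun x => (Real.cosh_pos x).ne'

lemma gamma_contOn : ContinuousOn modulationalIndex (Icc (1/10 : ℝ) 10) := by
  have hpos : ∀ z ∈ Icc (1/10 : ℝ) 10, (0:ℝ) < z := fun z hz => lt_of_lt_of_le (by norm_num) hz.1
  apply ContinuousOn.congr (f := fun z => 3 * Real.sqrt (Real.tanh z / z)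
      - 2 * Real.sqrt (Real.tanh (2*z) / (2*z)) - 1 + z * wD z)
  · have h1 : ContinuousOn (fun z : ℝ => Real.tanh z / z) (Icc (1/10:ℝ) 10) :=
      continuous_tanh'.continuousOn.div continuousOn_id (fun z hz => (hpos z hz).ne')
    have hs1 : ContinuousOn (fun z : ℝ => Real.sqrt (Real.tanh z / z)) (Icc (1/10:ℝ) 10) :=
      Real.continuous_sqrt.comp_continuousOn h1
    have h2 : ContinuousOn (fun z : ℝ => Real.sqrt (Real.tanh (2*z) / (2*z))) (Icc (1/10:ℝ) 10) := by
      apply Real.continuous_sqrt.comp_continuousOn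
      exact (continuous_tanh'.comp (continuous_const.mul continuous_id)).continuousOn.div
        (continuous_const.mul continuous_id).continuousOn
        (fun z hz => by have := hpos z hz; simp; positivity)
    have hnum : ContinuousOn (fun z : ℝ => (1 / Real.cosh z ^ 2 * z - Real.tanh z * 1) / z ^ 2)
        (Icc (1/10:ℝ) 10) := by
      apply ContinuousOn.div
      · exact ((continuous_const.div (Real.continuous_cosh.pow 2)
          (fun x => (pow_pos (Real.cosh_pos x) 2).ne')).mul continuous_id).continuousOn.sub
          (continuous_tanh'.continuousOn.mul continuousOn_const)
      · exact (continuous_id.pow 2).continuousOn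
      · intro z hz; have := hpos z hz; positivity
    have hwD : ContinuousOn wD (Icc (1/10:ℝ) 10) := by
      apply hnum.div (continuousOn_const.mul hs1)
      intro z hz
      have hzp := hpos z hz
      have : 0 < Real.sqrt (Real.tanh z / z) :=
        Real.sqrt_pos.mpr (div_pos (tanh_pos' hzp) hzp)
      exact mul_ne_zero two_ne_zero this.ne'
    exact (((continuousOn_const.mul hs1).sub (continuousOn_const.mul h2)).sub
      continuousOn_const).add (continuousOn_id.mul hwD)
  · intro z hz
    exact gamma_eq (hpos z hz)

theorem modulationalIndex_sign_change :
    ∃ z₀ z₁ : ℝ, 0 < z₀ ∧ z₀ < z₁ ∧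
      (∀ z ∈ Set.Ioo (0 : ℝ) z₀, 0 < modulationalIndex z) ∧
      (∀ z ∈ Set.Ioi z₁, modulationalIndex z < 0) ∧
      ∃ z ∈ Set.Ioi (0 : ℝ), modulationalIndex z = 0 := by
  refine ⟨3/10, 9, by norm_num, by norm_num, fun z hz => gamma_pos hz.1 hz.2,
    fun z hz => gamma_neg hz, ?_⟩
  have hsub := intermediate_value_Icc' (by norm_num : (1/10:ℝ) ≤ 10) gamma_contOn
  have h0mem : (0:ℝ) ∈ Icc (modulationalIndex 10) (modulationalIndex (1/10)) :=
    ⟨(gamma_neg (by norm_num)).le, (gamma_pos (by norm_num) (by norm_num)).le⟩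
  obtain ⟨z, hz, hz0⟩ := hsub h0mem
  exact ⟨z, lt_of_lt_of_le (by norm_num) hz.1, hz0⟩
end

section
/- Fix κ > 0 and for n ∈ ℤ set ω_n = n·(α(κ) − α(κn)). Then ω_{−n} = −ω_n for all n ∈ ℤ; ω_{−1} = ω_0 = ω_1 = 0; and for all integers 2 ≤ n < m one has 0 < ω_n < ω_m. -/
lemma tanh_div_strictAnti : StrictAntiOn (fun x : ℝ => Real.tanh x / x) (Set.Ioi 0) := by
  have heq : (fun x : ℝ => Real.tanh x / x) = fun x => Real.sinh x / (Real.cosh x * x) := by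
    funext x; rw [Real.tanh_eq_sinh_div_cosh, div_div]
  apply strictAntiOn_of_deriv_neg (convex_Ioi 0)
  · rw [heq]
    exact Real.continuous_sinh.continuousOn.div
      (Real.continuous_cosh.mul continuous_id).continuousOn
      (fun x hx => by have := Set.mem_Ioi.1 hx; positivity)
  · intro x hx
    rw [interior_Ioi] at hx
    have hx : (0:ℝ) < x := hx
    have hc := Real.cosh_pos x
    have hd : HasDerivAt (fun x => Real.sinh x / (Real.cosh x * x))
        ((Real.cosh x * (Real.cosh x * x) -
          Real.sinh x * (Real.sinh x * x + Real.cosh x * 1)) / (Real.cosh x * x)^2) x :=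
      (Real.hasDerivAt_sinh x).div ((Real.hasDerivAt_cosh x).mul (hasDerivAt_id x))
        (by positivity)
    rw [heq, hd.deriv]
    apply div_neg_of_neg_of_pos _ (by positivity)
    have h1 : x < Real.sinh x := Real.self_lt_sinh_iff.2 hx
    have h2 : (1:ℝ) ≤ Real.cosh x := Real.one_le_cosh x
    have h3 : 0 < Real.sinh x := Real.sinh_pos_iff.2 hx
    nlinarith [Real.cosh_sq x]

lemma whitham_anti {a b : ℝ} (ha : 0 < a) (hab : a < b) :
    whithamSymbol b < whithamSymbol a := by
  have hb : 0 < b := ha.trans hab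
  rw [whithamSymbol, whithamSymbol, if_neg (ne_of_gt hb), if_neg (ne_of_gt ha)]
  have htb : 0 < Real.tanh b := by
    rw [Real.tanh_eq_sinh_div_cosh]
    exact div_pos (Real.sinh_pos_iff.2 hb) (Real.cosh_pos b)
  exact Real.sqrt_lt_sqrt (div_nonneg htb.le hb.le)
    (tanh_div_strictAnti (Set.mem_Ioi.2 ha) (Set.mem_Ioi.2 hb) hab)

lemma whitham_even (x : ℝ) : whithamSymbol (-x) = whithamSymbol x := by
  unfold whithamSymbol
  rcases eq_or_ne x 0 with h | h
  · simp [h]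
  · rw [if_neg (by simpa using h), if_neg h, Real.tanh_neg, neg_div_neg_eq]

theorem bloch_eigenvalues_tau_zero (κ : ℝ) (hκ : 0 < κ) (ω : ℤ → ℝ)
    (hω : ∀ n : ℤ, ω n = (n : ℝ) * (whithamSymbol κ - whithamSymbol (κ * (n : ℝ)))) :
    (∀ n : ℤ, ω (-n) = -ω n) ∧
    ω (-1) = 0 ∧ ω 0 = 0 ∧ ω 1 = 0 ∧
    ∀ n m : ℤ, 2 ≤ n → n < m → 0 < ω n ∧ ω n < ω m := by
  have hodd : ∀ n : ℤ, ω (-n) = -ω n := by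
    intro n
    rw [hω (-n), hω n]
    push_cast
    rw [mul_neg, whitham_even]
    ring
  have h1 : ω 1 = 0 := by
    rw [hω 1]
    push_cast
    rw [mul_one]
    ring
  refine ⟨hodd, by rw [show (-1 : ℤ) = -(1:ℤ) by ring, hodd, h1]; ring,
    by rw [hω 0]; push_cast; ring, h1, ?_⟩
  intro n m h2 hnm
  have hn : (2:ℝ) ≤ (n:ℝ) := by exact_mod_cast h2
  have hm : (n:ℝ) < (m:ℝ) := by exact_mod_cast hnm
  have hκn : 0 < κ * (n:ℝ) := by nlinarith
  have hA : whithamSymbol (κ * (n:ℝ)) < whithamSymbol κ :=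
    whitham_anti hκ (by nlinarith)
  have hB : whithamSymbol (κ * (m:ℝ)) < whithamSymbol (κ * (n:ℝ)) :=
    whitham_anti hκn (by nlinarith)
  constructor
  · rw [hω n]
    have : 0 < whithamSymbol κ - whithamSymbol (κ * (n:ℝ)) := by linarith
    nlinarith
  · rw [hω n, hω m]
    nlinarith
end
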